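/- arXiv:2507.13872 — 2 statements merged into one kernel-verified Lean document; each statement's English description precedes it below -/
import Mathlib

section
/- Let l : [0,∞) → ℝ be three times differentiable and α > 0. Define h₁ = l′ + αl, h₂ = h₁′ + αh₁, h₃ = h₂′ + αh₂ (so h₃ = l′′′ + 3αl′′ + 3α²l′ + α³l). If h₃(t) ≥ 0 for all t ≥ 0 and l(0) ≥ 0, l′(0) + αl(0) ≥ 0, and l′′(0) + 2αl′(0) + α²l(0) ≥ 0, then l(t) ≥ 0 for all t ≥ 0. -/
/-! Multiplying by the integrating factor `exp (α t)` turns `y' + α y ≥ 0` into monotonicity of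
`exp (α t) * y t`, so `y` stays nonnegative on `[0, ∞)` once `y 0 ≥ 0`. Applied to `h₂`, `h₁`
and `l` in turn, this peels the three layers of `(d/dt + α)³ l ≥ 0` off one at a time. -/

open Real

noncomputable def shiftedDeriv (α : ℝ) (y : ℝ → ℝ) : ℝ → ℝ := fun t => deriv y t + α * y t

variable {α : ℝ} {y : ℝ → ℝ}

theorem differentiable_shiftedDeriv (hy : Differentiable ℝ y) (hy' : Differentiable ℝ (deriv y)) :
    Differentiable ℝ (shiftedDeriv α y) :=
  hy'.add (hy.const_mul α)

theorem deriv_shiftedDeriv (hy : Differentiable ℝ y) (hy' : Differentiable ℝ (deriv y)) :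
    deriv (shiftedDeriv α y) = shiftedDeriv α (deriv y) := by
  funext t
  exact ((hy' t).hasDerivAt.add ((hy t).hasDerivAt.const_mul α)).deriv

theorem hasDerivAt_exp_mul_mul {t : ℝ} (hy : DifferentiableAt ℝ y t) :
    HasDerivAt (fun s => exp (α * s) * y s) (exp (α * t) * shiftedDeriv α y t) t := by
  have hexp : HasDerivAt (fun s => exp (α * s)) (exp (α * t) * α) t := by
    simpa using ((hasDerivAt_id t).const_mul α).exp
  exact (hexp.mul hy.hasDerivAt).congr_deriv (by unfold shiftedDeriv; ring)

theorem nonneg_of_shiftedDeriv_nonneg (hy : Differentiable ℝ y)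
    (h : ∀ t, 0 ≤ t → 0 ≤ shiftedDeriv α y t) (h0 : 0 ≤ y 0) :
    ∀ t, 0 ≤ t → 0 ≤ y t := by
  intro t ht
  have hdiff : Differentiable ℝ fun s => exp (α * s) * y s :=
    fun s => (hasDerivAt_exp_mul_mul (hy s)).differentiableAt
  have hmono : MonotoneOn (fun s => exp (α * s) * y s) (Set.Ici 0) := by
    refine monotoneOn_of_deriv_nonneg (convex_Ici 0) hdiff.continuous.continuousOn
      hdiff.differentiableOn fun s hs => ?_
    rw [interior_Ici] at hs
    rw [(hasDerivAt_exp_mul_mul (hy s)).deriv]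
    exact mul_nonneg (exp_pos _).le (h s (le_of_lt hs))
  have key : exp (α * 0) * y 0 ≤ exp (α * t) * y t :=
    hmono Set.self_mem_Ici (Set.mem_Ici.mpr ht) ht
  rw [mul_zero, exp_zero, one_mul] at key
  exact nonneg_of_mul_nonneg_right (h0.trans key) (exp_pos _)

theorem third_order_hocbf_safety_general
    (α : ℝ)
    (l : ℝ → ℝ)
    (hl : Differentiable ℝ l) (hl' : Differentiable ℝ (deriv l))
    (hl'' : Differentiable ℝ (deriv (deriv l)))
    (h₁ h₂ h₃ : ℝ → ℝ)
    (hh₁ : ∀ t, h₁ t = deriv l t + α * l t)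
    (hh₂ : ∀ t, h₂ t = deriv h₁ t + α * h₁ t)
    (hh₃ : ∀ t, h₃ t = deriv h₂ t + α * h₂ t)
    (hpos : ∀ t, 0 ≤ t → h₃ t ≥ 0)
    (h0 : l 0 ≥ 0)
    (h1 : deriv l 0 + α * l 0 ≥ 0)
    (h2 : deriv (deriv l) 0 + 2 * α * deriv l 0 + α ^ 2 * l 0 ≥ 0) :
    ∀ t, 0 ≤ t → l t ≥ 0 := by
  have e₁ : h₁ = shiftedDeriv α l := funext hh₁
  have e₂ : h₂ = shiftedDeriv α h₁ := funext hh₂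
  have deriv_h₁ : deriv h₁ = shiftedDeriv α (deriv l) := e₁ ▸ deriv_shiftedDeriv hl hl'
  have dh₁ : Differentiable ℝ h₁ := e₁ ▸ differentiable_shiftedDeriv hl hl'
  have dh₁' : Differentiable ℝ (deriv h₁) := deriv_h₁ ▸ differentiable_shiftedDeriv hl' hl''
  have dh₂ : Differentiable ℝ h₂ := e₂ ▸ differentiable_shiftedDeriv dh₁ dh₁'
  have h₂_zero : 0 ≤ h₂ 0 := by
    rw [hh₂, deriv_h₁, hh₁]
    simp only [shiftedDeriv]
    linarith
  have nonneg₂ := nonneg_of_shiftedDeriv_nonneg dh₂ (fun t ht => hh₃ t ▸ hpos t ht) h₂_zero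
  have nonneg₁ := nonneg_of_shiftedDeriv_nonneg dh₁ (fun t ht => hh₂ t ▸ nonneg₂ t ht)
    (hh₁ 0 ▸ h1)
  exact nonneg_of_shiftedDeriv_nonneg hl (fun t ht => hh₁ t ▸ nonneg₁ t ht) h0

theorem third_order_hocbf_safety
    (α : ℝ) (hα : 0 < α)
    (l : ℝ → ℝ)
    (hl : Differentiable ℝ l) (hl' : Differentiable ℝ (deriv l))
    (hl'' : Differentiable ℝ (deriv (deriv l)))
    (h₁ h₂ h₃ : ℝ → ℝ)
    (hh₁ : ∀ t, h₁ t = deriv l t + α * l t)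
    (hh₂ : ∀ t, h₂ t = deriv h₁ t + α * h₁ t)
    (hh₃ : ∀ t, h₃ t = deriv h₂ t + α * h₂ t)
    (hpos : ∀ t, 0 ≤ t → h₃ t ≥ 0)
    (h0 : l 0 ≥ 0)
    (h1 : deriv l 0 + α * l 0 ≥ 0)
    (h2 : deriv (deriv l) 0 + 2 * α * deriv l 0 + α ^ 2 * l 0 ≥ 0) :
    ∀ t, 0 ≤ t → l t ≥ 0 :=
  third_order_hocbf_safety_general α l hl hl' hl'' h₁ h₂ h₃ hh₁ hh₂ hh₃ hpos h0 h1 h2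
end

section
/- Let h : ℝⁿ → ℝ be continuously differentiable, and consider the Euler discretization x_{k+1} = x_k + Δt·(f(x_k) + g(x_k)u_k). Suppose along the continuous dynamics ẋ = f(x) + g(x)u the barrier condition ∇h(x)·(f(x) + g(x)u) ≥ −α h(x) holds with α > 0 and αΔt ≤ 1, and suppose ∇h is L-Lipschitz and ‖f(x) + g(x)u_k‖ ≤ M. Then h(x_{k+1}) ≥ (1 − αΔt) h(x_k) − (L M² / 2) Δt². -/
/-!
Along the segment `t ↦ x + t • v`, the Lipschitz bound on `fderiv ℝ h` gives
`(d/dt) h (x + t • v) ≥ fderiv ℝ h x v - K t ‖v‖²`; integrating over `[0, 1]` yields the descent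
inequality `h (x + v) ≥ h x + fderiv ℝ h x v - K ‖v‖² / 2`. For the Euler step `v = Δt • w`, the
barrier condition bounds the linear term below by `-α Δt h x` and `‖w‖ ≤ M` bounds the quadratic one.
-/

open Set NNReal

lemma LipschitzWith.norm_sub_apply_le {E F G : Type*} [SeminormedAddCommGroup E]
    [NormedAddCommGroup F] [NormedSpace ℝ F] [NormedAddCommGroup G] [NormedSpace ℝ G]
    {K : ℝ≥0} {D : E → F →L[ℝ] G} (hD : LipschitzWith K D) (x y : E) (v : F) :
    ‖D y v - D x v‖ ≤ K * ‖y - x‖ * ‖v‖ :=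
  calc ‖D y v - D x v‖ = ‖(D y - D x) v‖ := rfl
    _ ≤ ‖D y - D x‖ * ‖v‖ := (D y - D x).le_opNorm v
    _ ≤ K * ‖y - x‖ * ‖v‖ := by
      gcongr
      exact hD.norm_sub_le y x

theorem Differentiable.add_fderiv_sub_le_of_lipschitzWith_fderiv {E : Type*}
    [NormedAddCommGroup E] [NormedSpace ℝ E] {h : E → ℝ} {K : ℝ≥0}
    (hh : Differentiable ℝ h) (hK : LipschitzWith K (fderiv ℝ h)) (x v : E) :
    h x + fderiv ℝ h x v - K * ‖v‖ ^ 2 / 2 ≤ h (x + v) := by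
  set ψ : ℝ → ℝ := fun t => h (x + t • v) - t * fderiv ℝ h x v + K * ‖v‖ ^ 2 / 2 * t ^ 2
  have hψ : ∀ t, HasDerivAt ψ (fderiv ℝ h (x + t • v) v - fderiv ℝ h x v + K * ‖v‖ ^ 2 * t) t := by
    intro t
    have hline : HasDerivAt (fun t : ℝ => x + t • v) v t := by
      simpa using ((hasDerivAt_id t).smul_const v).const_add x
    have := (((hh _).hasFDerivAt.comp_hasDerivAt t hline).sub
      ((hasDerivAt_id t).mul_const (fderiv ℝ h x v))).add
      ((hasDerivAt_pow 2 t).const_mul (K * ‖v‖ ^ 2 / 2))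
    exact this.congr_deriv (by push_cast; ring)
  have hψ_nonneg : ∀ t ∈ Ici (0 : ℝ),
      0 ≤ fderiv ℝ h (x + t • v) v - fderiv ℝ h x v + K * ‖v‖ ^ 2 * t := by
    intro t ht
    have hstep : ‖x + t • v - x‖ = t * ‖v‖ := by
      rw [add_sub_cancel_left, norm_smul, Real.norm_of_nonneg ht]
    have := hK.norm_sub_apply_le x (x + t • v) v
    rw [hstep, Real.norm_eq_abs] at this
    linarith [neg_abs_le (fderiv ℝ h (x + t • v) v - fderiv ℝ h x v)]
  have hmono : MonotoneOn ψ (Ici 0) :=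
    monotoneOn_of_hasDerivWithinAt_nonneg (convex_Ici 0)
      (fun t _ => (hψ t).continuousAt.continuousWithinAt)
      (fun t _ => (hψ t).hasDerivWithinAt)
      (fun t ht => hψ_nonneg t (interior_subset ht))
  have h01 : ψ 0 ≤ ψ 1 := hmono self_mem_Ici (mem_Ici.2 zero_le_one) zero_le_one
  simp only [ψ, zero_smul, add_zero, one_smul, zero_mul, sub_zero, one_mul] at h01
  linarith

theorem euler_step_barrier_bound_general
    {n m : ℕ}
    (h : EuclideanSpace ℝ (Fin n) → ℝ) (hC1 : ContDiff ℝ 1 h)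
    (L : ℝ) (hL : 0 ≤ L)
    (hLip : LipschitzWith L.toNNReal (fun x => fderiv ℝ h x))
    (f : EuclideanSpace ℝ (Fin n) → EuclideanSpace ℝ (Fin n))
    (g : EuclideanSpace ℝ (Fin n) → EuclideanSpace ℝ (Fin m) →L[ℝ] EuclideanSpace ℝ (Fin n))
    (xk xk1 : EuclideanSpace ℝ (Fin n)) (uk : EuclideanSpace ℝ (Fin m))
    (α Δt M : ℝ) (hΔt : 0 < Δt)
    (hbar : fderiv ℝ h xk (f xk + g xk uk) ≥ -α * h xk)
    (hvel : ‖f xk + g xk uk‖ ≤ M)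
    (hupd : xk1 = xk + Δt • (f xk + g xk uk)) :
    h xk1 ≥ (1 - α * Δt) * h xk - (L * M ^ 2 / 2) * Δt ^ 2 := by
  set w := f xk + g xk uk
  have hdescent := (hC1.differentiable one_ne_zero).add_fderiv_sub_le_of_lipschitzWith_fderiv
    hLip xk (Δt • w)
  rw [← hupd, Real.coe_toNNReal L hL, map_smul, smul_eq_mul, norm_smul,
    Real.norm_of_nonneg hΔt.le] at hdescent
  have hlinear : Δt * (-α * h xk) ≤ Δt * fderiv ℝ h xk w := mul_le_mul_of_nonneg_left hbar hΔt.le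
  have hquadratic : L * (Δt * ‖w‖) ^ 2 ≤ L * M ^ 2 * Δt ^ 2 := by
    rw [mul_pow, mul_comm (Δt ^ 2), ← mul_assoc]
    gcongr
  linarith

theorem euler_step_barrier_bound
    {n m : ℕ}
    (h : EuclideanSpace ℝ (Fin n) → ℝ) (hC1 : ContDiff ℝ 1 h)
    (L : ℝ) (hL : 0 ≤ L)
    (hLip : LipschitzWith L.toNNReal (fun x => fderiv ℝ h x))
    (f : EuclideanSpace ℝ (Fin n) → EuclideanSpace ℝ (Fin n))
    (g : EuclideanSpace ℝ (Fin n) → EuclideanSpace ℝ (Fin m) →L[ℝ] EuclideanSpace ℝ (Fin n))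
    (xk xk1 : EuclideanSpace ℝ (Fin n)) (uk : EuclideanSpace ℝ (Fin m))
    (α Δt M : ℝ) (hα : 0 < α) (hΔt : 0 < Δt) (hstep : α * Δt ≤ 1)
    (hbar : fderiv ℝ h xk (f xk + g xk uk) ≥ -α * h xk)
    (hvel : ‖f xk + g xk uk‖ ≤ M)
    (hupd : xk1 = xk + Δt • (f xk + g xk uk)) :
    h xk1 ≥ (1 - α * Δt) * h xk - (L * M ^ 2 / 2) * Δt ^ 2 :=
  euler_step_barrier_bound_general h hC1 L hL hLip f g xk xk1 uk α Δt M hΔt hbar hvel hupd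
end
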